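/- Euler's pentagonal number theorem: as formal power series, Π_{n≥1} (1 - qⁿ) = Σ_{j∈ℤ} (-1)^j q^{(3j²+j)/2}. -/

import Mathlib

open scoped Classical

namespace PentAux
open Finset

noncomputable def mx (S : Finset ℕ) : ℕ := if h : S.Nonempty then S.max' h else 0
noncomputable def mn (S : Finset ℕ) : ℕ := if h : S.Nonempty then S.min' h else 0
noncomputable def anch (S : Finset ℕ) : ℕ := sInf {x | Finset.Icc x (mx S) ⊆ S}

def excep (S : Finset ℕ) : Prop :=
  ∃ u, 1 ≤ u ∧ (S = Icc u (2*u-1) ∨ S = Icc (u+1) (2*u))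

noncomputable def phi (S : Finset ℕ) : Finset ℕ :=
  if mn S + anch S ≤ mx S + 1 then
    ((S \ Icc (mx S - mn S + 1) (mx S)).erase (mn S)) ∪ Icc (mx S - mn S + 2) (mx S + 1)
  else
    insert (mx S + 1 - anch S) ((S \ Icc (anch S) (mx S)) ∪ Icc (anch S - 1) (mx S - 1))
variable {S : Finset ℕ} {b : ℕ}

lemma mx_mem (h : S.Nonempty) : mx S ∈ S := by rw [mx, dif_pos h]; exact S.max'_mem h
lemma le_mx (h : S.Nonempty) {x : ℕ} (hx : x ∈ S) : x ≤ mx S := by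
  rw [mx, dif_pos h]; exact S.le_max' x hx
lemma mn_mem (h : S.Nonempty) : mn S ∈ S := by rw [mn, dif_pos h]; exact S.min'_mem h
lemma mn_le (h : S.Nonempty) {x : ℕ} (hx : x ∈ S) : mn S ≤ x := by
  rw [mn, dif_pos h]; exact S.min'_le x hx

lemma mx_eq (hb : b ∈ S) (h : ∀ x ∈ S, x ≤ b) : mx S = b :=
  le_antisymm (h _ (mx_mem ⟨b, hb⟩)) (le_mx ⟨b, hb⟩ hb)
lemma mn_eq (hb : b ∈ S) (h : ∀ x ∈ S, b ≤ x) : mn S = b :=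
  le_antisymm (mn_le ⟨b, hb⟩ hb) (h _ (mn_mem ⟨b, hb⟩))

lemma mx_Icc {a c : ℕ} (h : a ≤ c) : mx (Icc a c) = c :=
  mx_eq (mem_Icc.2 ⟨h, le_rfl⟩) (fun x hx => (mem_Icc.1 hx).2)
lemma mn_Icc {a c : ℕ} (h : a ≤ c) : mn (Icc a c) = a :=
  mn_eq (mem_Icc.2 ⟨le_rfl, h⟩) (fun x hx => (mem_Icc.1 hx).1)

lemma anch_sub : Icc (anch S) (mx S) ⊆ S := by
  have h : anch S ∈ {x | Icc x (mx S) ⊆ S} := Nat.sInf_mem ⟨mx S + 1, by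
    simp only [Set.mem_setOf_eq]
    rw [Icc_eq_empty_of_lt (Nat.lt_succ_self _)]
    exact empty_subset S⟩
  exact h
lemma anch_le (hb : Icc b (mx S) ⊆ S) : anch S ≤ b := Nat.sInf_le (by exact hb)
lemma anch_le_mx (h : S.Nonempty) : anch S ≤ mx S :=
  anch_le (by rw [Icc_self, singleton_subset_iff]; exact mx_mem h)
lemma anch_mem (h : S.Nonempty) : anch S ∈ S :=
  anch_sub (mem_Icc.2 ⟨le_rfl, anch_le_mx h⟩)
lemma anch_pos (h : S.Nonempty) (h0 : 0 ∉ S) : 1 ≤ anch S :=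
  Nat.one_le_iff_ne_zero.2 (fun hz => h0 (hz ▸ anch_mem h))
lemma anch_pred (h : S.Nonempty) (h0 : 0 ∉ S) : anch S - 1 ∉ S := by
  intro hmem
  have h1 := anch_pos h h0
  have hsub : Icc (anch S - 1) (mx S) ⊆ S := by
    intro x hx
    rcases mem_Icc.1 hx with ⟨hx1, hx2⟩
    rcases eq_or_lt_of_le hx1 with h' | h'
    · exact h' ▸ hmem
    · exact anch_sub (mem_Icc.2 ⟨by omega, hx2⟩)
  have := anch_le hsub
  omega
lemma anch_Icc {a c : ℕ} (h1 : 1 ≤ a) (h : a ≤ c) : anch (Icc a c) = a := by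
  have h2 : anch (Icc a c) ≤ a := anch_le (by rw [mx_Icc h])
  rcases Nat.lt_or_ge (anch (Icc a c)) a with h3 | h3
  · have : a - 1 ∈ Icc (anch (Icc a c)) (mx (Icc a c)) := by
      rw [mx_Icc h]; exact mem_Icc.2 ⟨by omega, by omega⟩
    have := mem_Icc.1 (anch_sub this)
    omega
  · omega

lemma mn_ge (h : S.Nonempty) (hb : ∀ x ∈ S, b ≤ x) : b ≤ mn S := hb _ (mn_mem h)


set_option maxHeartbeats 1000000 in
lemma phi_main (H0 : 0 ∉ S) (Hne : S.Nonempty) (Hx : ¬ excep S) :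
    0 ∉ phi S ∧ (phi S).Nonempty ∧ (phi S).sum id = S.sum id ∧ ¬ excep (phi S) ∧
      phi (phi S) = S ∧ ((phi S).card = S.card + 1 ∨ S.card = (phi S).card + 1) := by
  have hs1 : 1 ≤ mn S := Nat.one_le_iff_ne_zero.2 (fun h => H0 (h ▸ mn_mem Hne))
  have hsM : mn S ≤ mx S := mn_le Hne (mx_mem Hne)
  have ha1 : 1 ≤ anch S := anch_pos Hne H0
  have haM : anch S ≤ mx S := anch_le_mx Hne
  have hsa : mn S ≤ anch S := mn_le Hne (anch_mem Hne)
  have hrim : Icc (anch S) (mx S) ⊆ S := anch_sub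
  have hpred : anch S - 1 ∉ S := anch_pred Hne H0
  have hSub : ∀ x ∈ S, mn S ≤ x ∧ x ≤ mx S := fun x hx => ⟨mn_le Hne hx, le_mx Hne hx⟩
  set s := mn S
  set M := mx S
  set a := anch S
  by_cases hc : s + a ≤ M + 1
  · -- Case A : move the smallest part to the rim
    have h2s : 2 * s ≤ M := by
      by_contra h'
      apply Hx
      refine ⟨s, hs1, Or.inl ?_⟩
      have hse : Icc s M ⊆ S := fun x hx => by
        have h1 := (mem_Icc.1 hx).1
        have h2 := (mem_Icc.1 hx).2
        exact hrim (mem_Icc.2 ⟨by omega, h2⟩)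
      have hSe : S = Icc s M := subset_antisymm (fun x hx => mem_Icc.2 (hSub x hx)) hse
      have hm : M = 2 * s - 1 := by omega
      rw [hSe, hm]
    set I := Icc (M - s + 1) M with hI_def
    set J := Icc (M - s + 2) (M + 1) with hJ_def
    have hIS : I ⊆ S := fun x hx => by
      have h1 := (mem_Icc.1 hx).1
      have h2 := (mem_Icc.1 hx).2
      exact hrim (mem_Icc.2 ⟨by omega, h2⟩)
    have hsI : s ∉ I := by rw [hI_def, mem_Icc]; omega
    have hsSI : s ∈ S \ I := mem_sdiff.2 ⟨mn_mem Hne, hsI⟩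
    have cardI : I.card = s := by rw [hI_def, Nat.card_Icc]; omega
    have cardJ : J.card = s := by rw [hJ_def, Nat.card_Icc]; omega
    have hJI : J = I.image (· + 1) := by
      rw [hI_def, hJ_def, Finset.image_add_right_Icc]
    have hsumJ : J.sum id = I.sum id + s := by
      rw [hJI, Finset.sum_image (by intro x _ y _ h; simp only at h; omega)]
      simp only [id_eq]
      rw [Finset.sum_add_distrib, Finset.sum_const, smul_eq_mul, mul_one, cardI]
    have hphiS : phi S = ((S \ I).erase s) ∪ J := by rw [phi, if_pos hc]
    set T := ((S \ I).erase s) ∪ J with hT_def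
    have hmemT : ∀ x, x ∈ T ↔ ((x ∈ S ∧ x ≠ s ∧ ¬ (M - s + 1 ≤ x ∧ x ≤ M)) ∨ (M - s + 2 ≤ x ∧ x ≤ M + 1)) := by
      intro x
      simp only [hT_def, mem_union, mem_erase, mem_sdiff, hI_def, hJ_def, mem_Icc]
      tauto
    have hdisj : Disjoint ((S \ I).erase s) J := by
      rw [disjoint_left]
      intro x hx hxJ
      have h1 := (mem_sdiff.1 (mem_of_mem_erase hx)).1
      have h2 := (mem_sdiff.1 (mem_of_mem_erase hx)).2
      have h3 := (hSub x h1).2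
      rw [hI_def, mem_Icc] at h2
      rw [hJ_def, mem_Icc] at hxJ
      omega
    have hM1T : M + 1 ∈ T := (hmemT _).2 (Or.inr ⟨by omega, le_rfl⟩)
    have hTne : T.Nonempty := ⟨M + 1, hM1T⟩
    have hT0 : 0 ∉ T := by
      intro hx
      rw [hmemT] at hx
      rcases hx with ⟨h1, _, _⟩ | ⟨h1, _⟩
      · exact H0 h1
      · omega
    have hTbd : ∀ x ∈ T, s + 1 ≤ x ∧ x ≤ M + 1 := by
      intro x hx
      rw [hmemT] at hx
      rcases hx with ⟨h1, h2, h3⟩ | h1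
      · have := hSub x h1; omega
      · omega
    have hmxT : mx T = M + 1 := mx_eq hM1T (fun x hx => (hTbd x hx).2)
    have hnotinT : M - s + 1 ∉ T := by
      intro hx
      rw [hmemT] at hx
      rcases hx with ⟨_, _, h3⟩ | h3 <;> omega
    have hanchT : anch T = M - s + 2 := by
      have hle : anch T ≤ M - s + 2 := anch_le (by
        rw [hmxT]
        intro x hx
        rw [hmemT]
        rw [mem_Icc] at hx
        exact Or.inr hx)
      rcases Nat.lt_or_ge (anch T) (M - s + 2) with h3 | h3
      · exfalso
        exact hnotinT (anch_sub (mem_Icc.2 ⟨by omega, by rw [hmxT]; omega⟩))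
      · omega
    have hmnT : s + 1 ≤ mn T := mn_ge hTne (fun x hx => (hTbd x hx).1)
    -- compute phi T
    have hcT : ¬ (mn T + anch T ≤ mx T + 1) := by rw [hmxT, hanchT]; omega
    have hphiT : phi T = S := by
      rw [phi, if_neg hcT, hmxT, hanchT]
      have e1 : Icc (M - s + 2) (M + 1) = J := rfl
      have e2 : Icc (M - s + 2 - 1) (M + 1 - 1) = I := by rw [hI_def]; congr 1 <;> omega
      have e3 : M + 1 + 1 - (M - s + 2) = s := by omega
      rw [e1, e2, e3]
      have e4 : T \ J = (S \ I).erase s := by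
        rw [hT_def, union_sdiff_right, sdiff_eq_self_of_disjoint hdisj]
      rw [e4]
      have e5 : (S \ I).erase s = (S.erase s) \ I := (Finset.erase_sdiff_comm S I s).symm
      rw [e5, sdiff_union_self_eq_union, union_eq_left.2 (fun x hx => mem_erase.2
        ⟨by rintro rfl; exact hsI hx, hIS hx⟩), insert_erase (mn_mem Hne)]
    have hsumT : T.sum id = S.sum id := by
      have e1 : T.sum id = ((S \ I).erase s).sum id + J.sum id := sum_union hdisj
      have e2 : ((S \ I).erase s).sum id + s = (S \ I).sum id := sum_erase_add _ _ hsSI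
      have e3 : (S \ I).sum id + I.sum id = S.sum id := sum_sdiff hIS
      omega
    have hcardT : S.card = T.card + 1 := by
      have e1 : T.card = ((S \ I).erase s).card + J.card := card_union_of_disjoint hdisj
      have e2 : ((S \ I).erase s).card = (S \ I).card - 1 := card_erase_of_mem hsSI
      have e3 : (S \ I).card = S.card - I.card := card_sdiff_of_subset hIS
      have e4 : I.card + 1 ≤ S.card := by
        have : insert s I ⊆ S := insert_subset (mn_mem Hne) hIS
        have := card_le_card this
        rw [card_insert_of_notMem hsI] at this
        omega
      have e5 : 1 ≤ (S \ I).card := by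
        rw [e3]; omega
      omega
    have hexT : ¬ excep T := by
      rintro ⟨u, hu, hE | hE⟩
      · have h1 : mx T = 2*u-1 := by rw [hE]; exact mx_Icc (by omega)
        have h2 : anch T = u := by rw [hE]; exact anch_Icc hu (by omega)
        rw [hmxT] at h1
        rw [hanchT] at h2
        omega
      · have h1 : mx T = 2*u := by rw [hE]; exact mx_Icc (by omega)
        have h2 : anch T = u+1 := by rw [hE]; exact anch_Icc (by omega) (by omega)
        rw [hmxT] at h1
        rw [hanchT] at h2
        omega
    rw [hphiS]
    exact ⟨hT0, hTne, hsumT, hexT, hphiT, Or.inr hcardT⟩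
  · -- Case B : move the rim down to a new smallest part
    push_neg at hc
    have hM2a : M + 3 ≤ 2 * a := by
      by_contra h'
      apply Hx
      have hsa' : a ≤ s := by omega
      have hse : S = Icc a M := by
        apply subset_antisymm _ hrim
        intro x hx
        have := hSub x hx
        exact mem_Icc.2 ⟨by omega, this.2⟩
      have hMa : M = 2 * a - 2 := by omega
      have ha2 : 2 ≤ a := by omega
      refine ⟨a - 1, by omega, Or.inr ?_⟩
      rw [hse, hMa]
      congr 1 <;> omega
    set r := M + 1 - a with hr_def
    have hr1 : 1 ≤ r := by omega
    have hra : r + 2 ≤ a := by omega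
    have hrs : r + 1 ≤ s := by omega
    have ha2 : 3 ≤ a := by omega
    set R := Icc a M with hR_def
    set R' := Icc (a - 1) (M - 1) with hR'_def
    have hSR : ∀ x ∈ S \ R, s ≤ x ∧ x + 2 ≤ a := by
      intro x hx
      rcases mem_sdiff.1 hx with ⟨h1, h2⟩
      rw [hR_def, mem_Icc] at h2
      have h3 := hSub x h1
      have h4 : x ≠ a - 1 := by rintro rfl; exact hpred h1
      omega
    have hdisj1 : Disjoint (S \ R) R' := by
      rw [disjoint_left]
      intro x hx hx'
      have := hSR x hx
      rw [hR'_def, mem_Icc] at hx'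
      omega
    have hrnot : r ∉ (S \ R) ∪ R' := by
      intro hx
      rcases mem_union.1 hx with h | h
      · have := hSR r h; omega
      · rw [hR'_def, mem_Icc] at h; omega
    have cardR : R.card = r := by rw [hR_def, Nat.card_Icc]
    have cardR' : R'.card = r := by rw [hR'_def, Nat.card_Icc]; omega
    have hRR' : R = R'.image (· + 1) := by
      rw [hR_def, hR'_def, Finset.image_add_right_Icc]
      congr 1 <;> omega
    have hsumR : R.sum id = R'.sum id + r := by
      rw [hRR', Finset.sum_image (by intro x _ y _ h; simp only at h; omega)]
      simp only [id_eq]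
      rw [Finset.sum_add_distrib, Finset.sum_const, smul_eq_mul, mul_one, cardR']
    have hphiS : phi S = insert r ((S \ R) ∪ R') := by rw [phi, if_neg (by omega)]
    set T := insert r ((S \ R) ∪ R') with hT_def
    have hmemT : ∀ x, x ∈ T ↔ (x = r ∨ (x ∈ S ∧ ¬ (a ≤ x ∧ x ≤ M)) ∨ (a - 1 ≤ x ∧ x ≤ M - 1)) := by
      intro x
      simp only [hT_def, mem_insert, mem_union, mem_sdiff, hR_def, hR'_def, mem_Icc]
    have hrT : r ∈ T := mem_insert_self _ _
    have hTne : T.Nonempty := ⟨r, hrT⟩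
    have hT0 : 0 ∉ T := by
      intro hx
      rcases (hmemT 0).1 hx with h | ⟨h, _⟩ | h
      · omega
      · exact H0 h
      · omega
    have hTbd : ∀ x ∈ T, r ≤ x ∧ x ≤ M - 1 := by
      intro x hx
      rcases (hmemT x).1 hx with h | ⟨h1, h2⟩ | h
      · omega
      · have := hSub x h1; omega
      · omega
    have hM1T : M - 1 ∈ T := (hmemT _).2 (Or.inr (Or.inr ⟨by omega, le_rfl⟩))
    have hmxT : mx T = M - 1 := mx_eq hM1T (fun x hx => (hTbd x hx).2)
    have hmnT : mn T = r := mn_eq hrT (fun x hx => (hTbd x hx).1)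
    have hanchT : anch T ≤ a - 1 := anch_le (by
      rw [hmxT]
      intro x hx
      exact (hmemT x).2 (Or.inr (Or.inr (mem_Icc.1 hx))))
    -- compute phi T
    have hcT : mn T + anch T ≤ mx T + 1 := by rw [hmxT, hmnT]; omega
    have hphiT : phi T = S := by
      rw [phi, if_pos hcT, hmxT, hmnT]
      have e1 : Icc (M - 1 - r + 1) (M - 1) = R' := by rw [hR'_def]; congr 1; omega
      have e2 : Icc (M - 1 - r + 2) (M - 1 + 1) = R := by rw [hR_def]; congr 1 <;> omega
      rw [e1, e2]
      have e3 : T \ R' = insert r (S \ R) := by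
        rw [hT_def, insert_sdiff_of_notMem _ (by rw [hR'_def, mem_Icc]; omega),
          union_sdiff_right, sdiff_eq_self_of_disjoint hdisj1]
      rw [e3, erase_insert (fun h => hrnot (mem_union_left _ h)),
        sdiff_union_of_subset hrim]
    have hsumT : T.sum id = S.sum id := by
      have e1 : T.sum id = r + ((S \ R) ∪ R').sum id := sum_insert hrnot
      have e2 : ((S \ R) ∪ R').sum id = (S \ R).sum id + R'.sum id := sum_union hdisj1
      have e3 : (S \ R).sum id + R.sum id = S.sum id := sum_sdiff hrim
      omega
    have hcardT : T.card = S.card + 1 := by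
      have e1 : T.card = ((S \ R) ∪ R').card + 1 := card_insert_of_notMem hrnot
      have e2 : ((S \ R) ∪ R').card = (S \ R).card + R'.card := card_union_of_disjoint hdisj1
      have e3 : (S \ R).card = S.card - R.card := card_sdiff_of_subset hrim
      have e4 : R.card ≤ S.card := card_le_card hrim
      omega
    have hexT : ¬ excep T := by
      rintro ⟨u, hu, hE | hE⟩
      · have h1 : mx T = 2*u-1 := by rw [hE]; exact mx_Icc (by omega)
        have h2 : mn T = u := by rw [hE]; exact mn_Icc (by omega)
        rw [hmxT] at h1
        rw [hmnT] at h2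
        omega
      · have h1 : mx T = 2*u := by rw [hE]; exact mx_Icc (by omega)
        have h2 : mn T = u+1 := by rw [hE]; exact mn_Icc (by omega)
        rw [hmxT] at h1
        rw [hmnT] at h2
        omega
    rw [hphiS]
    exact ⟨hT0, hTne, hsumT, hexT, hphiT, Or.inl hcardT⟩

lemma pent_core {j k : ℤ} (h : 3*j^2 + j = 3*k^2 + k) : j = k := by
  have h2 : (j - k) * (3*j + 3*k + 1) = 0 := by linear_combination h
  rcases mul_eq_zero.1 h2 with h3 | h3 <;> omega

lemma pent_even (j : ℤ) : 2 * ((3*j^2 + j)/2) = 3*j^2 + j := by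
  have h : (2:ℤ) ∣ 3*j^2 + j := by
    rcases Int.even_or_odd j with ⟨t, ht⟩ | ⟨t, ht⟩
    · exact ⟨6*t^2 + t, by subst ht; ring⟩
    · exact ⟨6*t^2 + 7*t + 2, by subst ht; ring⟩
  exact Int.mul_ediv_cancel' h

lemma sum_Icc_two (p q : ℕ) (h2 : p ≤ q + 1) :
    2 * (Icc p q).sum id + p * (p - 1) = (q + 1) * q := by
  have g1 : ((range (q+1)).sum id) * 2 = (q+1) * (q+1-1) := Finset.sum_range_id_mul_two (q+1)
  have g2 : ((range p).sum id) * 2 = p * (p-1) := Finset.sum_range_id_mul_two p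
  have g3 : (range p).sum id + (Icc p q).sum id = (range (q+1)).sum id := by
    rw [range_eq_Ico, range_eq_Ico, ← Finset.Ico_add_one_right_eq_Icc]
    exact Finset.sum_Ico_consecutive (f := id) (Nat.zero_le p) h2
  rw [Nat.add_sub_cancel] at g1
  omega

lemma sumA (u : ℕ) (hu : 1 ≤ u) :
    2 * (Icc u (2*u-1)).sum id + u = 3 * u * u ∧ (Icc u (2*u-1)).card = u := by
  constructor
  · obtain ⟨n, rfl⟩ : ∃ n, u = n + 1 := ⟨u - 1, by omega⟩
    have hIc : Icc (n+1) (2*(n+1)-1) = Icc (n+1) (2*n+1) := by congr 1 <;> omega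
    rw [hIc]
    have h := sum_Icc_two (n+1) (2*n+1) (by omega)
    rw [Nat.add_sub_cancel] at h
    have e1 : (2*n+1+1) * (2*n+1) = 4*(n*n)+6*n+2 := by ring
    have e2 : (n+1) * n = n*n+n := by ring
    have e3 : 3 * (n+1) * (n+1) = 3*(n*n)+6*n+3 := by ring
    rw [e1, e2] at h
    rw [e3]
    omega
  · rw [Nat.card_Icc]; omega

lemma sumB (u : ℕ) (hu : 1 ≤ u) :
    2 * (Icc (u+1) (2*u)).sum id = 3 * u * u + u ∧ (Icc (u+1) (2*u)).card = u := by
  constructor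
  · have h := sum_Icc_two (u+1) (2*u) (by omega)
    rw [Nat.add_sub_cancel] at h
    have e1 : (2*u+1) * (2*u) = 4*(u*u) + 2*u := by ring
    have e2 : (u+1) * u = u*u + u := by ring
    have e3 : 3 * u * u = 3*(u*u) := by ring
    rw [e1, e2] at h
    rw [e3]
    omega
  · rw [Nat.card_Icc]; omega

/-- Membership facts for elements of the filtered collection. -/
lemma mem_F {m : ℕ} {S : Finset ℕ}
    (hS : S ∈ (Finset.Icc 1 (m+1)).powerset.filter (fun S => S.sum id = m)) :
    S ⊆ Finset.Icc 1 (m+1) ∧ S.sum id = m := by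
  rw [mem_filter, mem_powerset] at hS
  exact hS

lemma mem_F' {m : ℕ} {S : Finset ℕ} (h1 : S ⊆ Finset.Icc 1 (m+1)) (h2 : S.sum id = m)
    (hm : 1 ≤ m) : 0 ∉ S ∧ S.Nonempty := by
  constructor
  · intro h0
    have := mem_Icc.1 (h1 h0)
    omega
  · rcases S.eq_empty_or_nonempty with rfl | h
    · simp at h2; omega
    · exact h

lemma subset_of_sum {m : ℕ} {S : Finset ℕ} (h0 : 0 ∉ S) (h2 : S.sum id = m) :
    S ⊆ Finset.Icc 1 (m+1) := by
  intro x hx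
  have hle : id x ≤ S.sum id := Finset.single_le_sum (fun i _ => Nat.zero_le i) hx
  rw [h2] at hle
  simp only [id_eq] at hle
  have : x ≠ 0 := by rintro rfl; exact h0 hx
  rw [mem_Icc]
  omega

lemma sum_filter_not_excep (m : ℕ) (hm : 1 ≤ m) :
    ∑ S ∈ ((Finset.Icc 1 (m+1)).powerset.filter (fun S => S.sum id = m)).filter
      (fun S => ¬ excep S), (-1:ℤ)^S.card = 0 := by
  set F := ((Finset.Icc 1 (m+1)).powerset.filter (fun S => S.sum id = m)).filter
      (fun S => ¬ excep S) with hF_def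
  have hmem : ∀ S, S ∈ F → (0 ∉ S ∧ S.Nonempty ∧ S.sum id = m ∧ ¬ excep S) := by
    intro S hS
    rw [hF_def, mem_filter] at hS
    obtain ⟨h1, h2⟩ := mem_F hS.1
    obtain ⟨h3, h4⟩ := mem_F' h1 h2 hm
    exact ⟨h3, h4, h2, hS.2⟩
  have key : ∀ S, S ∈ F → (0 ∉ phi S ∧ (phi S).Nonempty ∧ (phi S).sum id = S.sum id ∧
      ¬ excep (phi S) ∧ phi (phi S) = S ∧
      ((phi S).card = S.card + 1 ∨ S.card = (phi S).card + 1)) := by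
    intro S hS
    obtain ⟨h0, hne, _, hx⟩ := hmem S hS
    exact phi_main h0 hne hx
  have hmemphi : ∀ S (hS : S ∈ F), phi S ∈ F := by
    intro S hS
    obtain ⟨h0, hne, hsum, hx⟩ := hmem S hS
    obtain ⟨p0, pne, psum, pex, _, _⟩ := key S hS
    rw [hF_def, mem_filter, mem_filter, mem_powerset]
    exact ⟨⟨subset_of_sum p0 (by rw [psum, hsum]), by rw [psum, hsum]⟩, pex⟩
  refine Finset.sum_involution (fun S _ => phi S) ?_ ?_ hmemphi ?_
  · intro S hS
    obtain ⟨_, _, _, _, _, hcard⟩ := key S hS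
    rcases hcard with h | h <;> rw [h] <;> ring
  · intro S hS _
    obtain ⟨_, _, _, _, _, hcard⟩ := key S hS
    intro hEq
    have hEq' : phi S = S := hEq
    rw [hEq'] at hcard
    omega
  · intro S hS
    obtain ⟨_, _, _, _, hphi, _⟩ := key S hS
    exact hphi

end PentAux


section Main
open Finset PentAux

open PowerSeries in
/-- Euler's pentagonal number theorem, stated coefficientwise: for every `m`,
the `m`-th coefficient of the (truncation-stable) product `Π_{n=1}^{m+1} (1 - qⁿ)`
— which equals the `m`-th coefficient of the infinite product `Π_{n≥1} (1 - qⁿ)`,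
since factors with `n > m` do not affect it — is `(-1)^j` if `m = (3j²+j)/2`
for some `j : ℤ`, and `0` otherwise. -/
theorem euler_pentagonal_number_theorem (m : ℕ) :
    PowerSeries.coeff (R := ℤ) m (∏ n ∈ Finset.Icc 1 (m + 1), (1 - (X : PowerSeries ℤ) ^ n)) =
      if h : ∃ j : ℤ, (m : ℤ) = (3 * j ^ 2 + j) / 2 then
        (-1 : ℤ) ^ h.choose.natAbs
      else 0 := by
  have key : (PowerSeries.coeff (R := ℤ) m) (∏ n ∈ Finset.Icc 1 (m + 1), (1 - (X : PowerSeries ℤ) ^ n)) =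
      ∑ S ∈ (Finset.Icc 1 (m+1)).powerset.filter (fun S => S.sum id = m), (-1 : ℤ)^S.card := by
    have h1 : ∀ n ∈ Finset.Icc 1 (m+1), (1 - (X : PowerSeries ℤ)^n) = (-(X^n) + 1) :=
      fun n _ => by ring
    rw [Finset.prod_congr rfl h1, Finset.prod_add, map_sum, Finset.sum_filter]
    apply Finset.sum_congr rfl
    intro S hS
    rw [Finset.prod_const_one, mul_one]
    have h2 : (∏ i ∈ S, -((X : PowerSeries ℤ))^i)
        = PowerSeries.C (R := ℤ) ((-1)^S.card) * X ^ (S.sum id) := by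
      calc ∏ i ∈ S, -((X : PowerSeries ℤ))^i
          = ∏ i ∈ S, (PowerSeries.C (R := ℤ) (-1) * X^i) := by
            apply Finset.prod_congr rfl
            intro i _
            rw [map_neg, map_one]
            ring
        _ = (∏ _i ∈ S, PowerSeries.C (R := ℤ) (-1)) * ∏ i ∈ S, (X:PowerSeries ℤ)^i :=
            Finset.prod_mul_distrib
        _ = PowerSeries.C (R := ℤ) ((-1)^S.card) * X ^ (S.sum id) := by
            rw [Finset.prod_const, ← map_pow]
            congr 1
            exact Finset.prod_pow_eq_pow_sum S id _
    rw [h2, PowerSeries.coeff_C_mul, PowerSeries.coeff_X_pow]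
    by_cases hs : S.sum id = m
    · rw [if_pos hs, if_pos hs.symm, mul_one]
    · rw [if_neg hs, if_neg (fun hh => hs hh.symm), mul_zero]
  rw [key]
  rcases Nat.eq_zero_or_pos m with rfl | hm
  · -- m = 0
    have hF0 : (Finset.Icc 1 (0+1)).powerset.filter (fun S => S.sum id = 0) = {∅} := by
      ext S
      simp only [Finset.mem_filter, Finset.mem_powerset, Finset.mem_singleton]
      constructor
      · rintro ⟨hsub, hsum⟩
        rw [Finset.eq_empty_iff_forall_notMem]
        intro x hx
        have h3 := (Finset.sum_eq_zero_iff.1 hsum) x hx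
        have h4 := Finset.mem_Icc.1 (hsub hx)
        simp only [id_eq] at h3
        omega
      · rintro rfl
        exact ⟨Finset.empty_subset _, rfl⟩
    rw [hF0, Finset.sum_singleton, Finset.card_empty, pow_zero]
    have hex : ∃ j : ℤ, ((0:ℕ) : ℤ) = (3 * j ^ 2 + j) / 2 := ⟨0, by norm_num⟩
    rw [dif_pos hex]
    have hspec : ((0:ℕ):ℤ) = (3 * hex.choose ^ 2 + hex.choose) / 2 := hex.choose_spec
    have h2 : (3 * hex.choose ^ 2 + hex.choose) = 0 := by
      rw [← PentAux.pent_even hex.choose, ← hspec]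
      norm_num
    have h3 : hex.choose = 0 := PentAux.pent_core (k := 0) (by rw [h2]; norm_num)
    rw [h3]
    norm_num
  · -- m ≥ 1
    by_cases h : ∃ j : ℤ, (m : ℤ) = (3 * j ^ 2 + j) / 2
    · rw [dif_pos h]
      set j := h.choose with hj_def
      have hspec : (m:ℤ) = (3*j^2 + j)/2 := h.choose_spec
      have h2m : 2 * (m:ℤ) = 3*j^2 + j := by rw [hspec, PentAux.pent_even]
      set u := j.natAbs with hu_def
      have hu : 1 ≤ u := by
        rcases Nat.eq_zero_or_pos u with h0 | h0
        · exfalso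
          have hj0 : j = 0 := Int.natAbs_eq_zero.1 h0
          rw [hj0] at h2m
          norm_num at h2m
          omega
        · exact h0
      rcases lt_or_ge j 0 with hjneg | hjpos
      · -- j < 0 : E = Icc u (2u-1)
        have hju : ((u:ℤ)) = -j := by
          rw [hu_def]; exact Int.ofNat_natAbs_of_nonpos (le_of_lt hjneg)
        have h2mn : 2 * m + u = 3 * u * u := by
          zify
          have : (3:ℤ) * u * u = 3 * (-j) * (-j) := by rw [hju]
          rw [this, hju]
          linear_combination h2m
        obtain ⟨hsumE, hcardE⟩ := PentAux.sumA u hu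
        have hsE : (Icc u (2*u-1)).sum id = m := by omega
        have hE0 : (0:ℕ) ∉ Icc u (2*u-1) := by rw [mem_Icc]; omega
        have hEF : Icc u (2*u-1) ∈ (Finset.Icc 1 (m+1)).powerset.filter (fun S => S.sum id = m) :=
          Finset.mem_filter.2 ⟨Finset.mem_powerset.2 (PentAux.subset_of_sum hE0 hsE), hsE⟩
        have hexE : excep (Icc u (2*u-1)) := ⟨u, hu, Or.inl rfl⟩
        have huniq : ∀ S ∈ (Finset.Icc 1 (m+1)).powerset.filter (fun S => S.sum id = m),
            excep S → S = Icc u (2*u-1) := by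
          intro S hSF hexS
          have hsum : S.sum id = m := (Finset.mem_filter.1 hSF).2
          obtain ⟨v, hv, hE1 | hE1⟩ := hexS
          · have hA := (PentAux.sumA v hv).1
            rw [← hE1, hsum] at hA
            have hjv : j = -(v:ℤ) := by
              apply PentAux.pent_core
              have hAz : 2 * (m:ℤ) + v = 3 * v * v := by exact_mod_cast hA
              linear_combination hAz - h2m
            have : u = v := by rw [hu_def, hjv]; simp
            rw [hE1, this]
          · have hB := (PentAux.sumB v hv).1
            rw [← hE1, hsum] at hB
            have hjv : j = (v:ℤ) := by
              apply PentAux.pent_core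
              have hBz : 2 * (m:ℤ) = 3 * v * v + v := by exact_mod_cast hB
              linear_combination hBz - h2m
            exfalso
            have : (0:ℤ) ≤ j := by rw [hjv]; positivity
            omega
        have hfilter : ((Finset.Icc 1 (m+1)).powerset.filter (fun S => S.sum id = m)).filter
            (fun S => excep S) = {Icc u (2*u-1)} := by
          apply Finset.eq_singleton_iff_unique_mem.2
          refine ⟨Finset.mem_filter.2 ⟨hEF, hexE⟩, fun S hS => ?_⟩
          exact huniq S (Finset.mem_filter.1 hS).1 (Finset.mem_filter.1 hS).2
        rw [← Finset.sum_filter_add_sum_filter_not _ (fun S => excep S), hfilter,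
          Finset.sum_singleton, PentAux.sum_filter_not_excep m hm, add_zero, hcardE]
      · -- j ≥ 0 : E = Icc (u+1) (2u)
        have hju : ((u:ℤ)) = j := by
          rw [hu_def]; exact Int.natAbs_of_nonneg hjpos
        have h2mn : 2 * m = 3 * u * u + u := by
          zify
          have : (3:ℤ) * u * u = 3 * j * j := by rw [hju]
          rw [this, hju]
          linear_combination h2m
        obtain ⟨hsumE, hcardE⟩ := PentAux.sumB u hu
        have hsE : (Icc (u+1) (2*u)).sum id = m := by omega
        have hE0 : (0:ℕ) ∉ Icc (u+1) (2*u) := by rw [mem_Icc]; omega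
        have hEF : Icc (u+1) (2*u) ∈ (Finset.Icc 1 (m+1)).powerset.filter (fun S => S.sum id = m) :=
          Finset.mem_filter.2 ⟨Finset.mem_powerset.2 (PentAux.subset_of_sum hE0 hsE), hsE⟩
        have hexE : excep (Icc (u+1) (2*u)) := ⟨u, hu, Or.inr rfl⟩
        have huniq : ∀ S ∈ (Finset.Icc 1 (m+1)).powerset.filter (fun S => S.sum id = m),
            excep S → S = Icc (u+1) (2*u) := by
          intro S hSF hexS
          have hsum : S.sum id = m := (Finset.mem_filter.1 hSF).2
          obtain ⟨v, hv, hE1 | hE1⟩ := hexS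
          · have hA := (PentAux.sumA v hv).1
            rw [← hE1, hsum] at hA
            have hjv : j = -(v:ℤ) := by
              apply PentAux.pent_core
              have hAz : 2 * (m:ℤ) + v = 3 * v * v := by exact_mod_cast hA
              linear_combination hAz - h2m
            exfalso
            omega
          · have hB := (PentAux.sumB v hv).1
            rw [← hE1, hsum] at hB
            have hjv : j = (v:ℤ) := by
              apply PentAux.pent_core
              have hBz : 2 * (m:ℤ) = 3 * v * v + v := by exact_mod_cast hB
              linear_combination hBz - h2m
            have : u = v := by rw [hu_def, hjv]; simp
            rw [hE1, this]
        have hfilter : ((Finset.Icc 1 (m+1)).powerset.filter (fun S => S.sum id = m)).filter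
            (fun S => excep S) = {Icc (u+1) (2*u)} := by
          apply Finset.eq_singleton_iff_unique_mem.2
          refine ⟨Finset.mem_filter.2 ⟨hEF, hexE⟩, fun S hS => ?_⟩
          exact huniq S (Finset.mem_filter.1 hS).1 (Finset.mem_filter.1 hS).2
        rw [← Finset.sum_filter_add_sum_filter_not _ (fun S => excep S), hfilter,
          Finset.sum_singleton, PentAux.sum_filter_not_excep m hm, add_zero, hcardE]
    · rw [dif_neg h]
      have hfilter : ((Finset.Icc 1 (m+1)).powerset.filter (fun S => S.sum id = m)).filter
          (fun S => excep S) = ∅ := by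
        rw [Finset.filter_eq_empty_iff]
        intro S hSF hexS
        have hsum : S.sum id = m := (Finset.mem_filter.1 hSF).2
        obtain ⟨v, hv, hE1 | hE1⟩ := hexS
        · have hA := (PentAux.sumA v hv).1
          rw [← hE1, hsum] at hA
          have hAz : 2 * (m:ℤ) + v = 3 * v * v := by exact_mod_cast hA
          apply h
          refine ⟨-(v:ℤ), ?_⟩
          have hco : 2*(m:ℤ) = 3*(-(v:ℤ))^2 + (-(v:ℤ)) := by linear_combination hAz
          have hpe := PentAux.pent_even (-(v:ℤ))
          omega
        · have hB := (PentAux.sumB v hv).1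
          rw [← hE1, hsum] at hB
          have hBz : 2 * (m:ℤ) = 3 * v * v + v := by exact_mod_cast hB
          apply h
          refine ⟨(v:ℤ), ?_⟩
          have hco : 2*(m:ℤ) = 3*((v:ℤ))^2 + ((v:ℤ)) := by linear_combination hBz
          have hpe := PentAux.pent_even ((v:ℤ))
          omega
      rw [← Finset.sum_filter_add_sum_filter_not _ (fun S => excep S), hfilter,
        Finset.sum_empty, PentAux.sum_filter_not_excep m hm, add_zero]

end Main
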